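/- On 𝕋ⁿ × S^{n+1} with coordinates (x₁,…,xₙ) ∈ 𝕋ⁿ and (y₁,…,y_{n+2}) ∈ S^{n+1} ⊂ ℝ^{n+2}, the 1-form α = Σ_{j=1}^{n} yⱼ dxⱼ + ½(y_{n+1} dy_{n+2} − y_{n+2} dy_{n+1}) is a contact form; moreover, its restriction to each sphere {x} × S^{n+1} equals ½(y_{n+1} dy_{n+2} − y_{n+2} dy_{n+1}), which induces the standard Legendrian open book on S^{n+1} with binding {y_{n+1} = y_{n+2} = 0}. -/

import Mathlib

/-!
At a point `(x, y)`, `dα` is the standard symplectic form `ω` on `ℝⁿ × ℝ^{n+2}` (pairing `dxⱼ`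
with `dyⱼ`, and `dy_{n+1}` with `dy_{n+2}`), and the contact plane is cut out by the two 1-forms
`⟨y, ·⟩` and `α`, which are `ω (z₁, ·)` and `ω (z₂, ·)` for explicit vectors `z₁, z₂`. The
`ω`-orthogonal of a plane `span {z₁, z₂}` with `ω (z₁, z₂) ≠ 0` is symplectic, and here
`ω (z₁, z₂) = (‖y‖² + y₁² + ⋯ + yₙ²) / 2 > 0`.
-/

theorem LinearMap.BilinForm.IsAlt.eq_zero_of_orthogonal_pair {K E : Type*} [Field K]
    [AddCommGroup E] [Module K E] {ω : LinearMap.BilinForm K E} (hω : ω.IsAlt)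
    (hsep : ω.SeparatingLeft) {z₁ z₂ : E} (hz : ω z₁ z₂ ≠ 0) {w : E} (hw₁ : ω z₁ w = 0)
    (hw₂ : ω z₂ w = 0) (h : ∀ w', ω z₁ w' = 0 → ω z₂ w' = 0 → ω w w' = 0) : w = 0 := by
  refine hsep w fun w' => ?_
  -- project `w'` onto the common kernel of `ω z₁` and `ω z₂` along `span {z₁, z₂}`
  have key := h (w' + (ω z₂ w' / ω z₁ z₂) • z₁ - (ω z₁ w' / ω z₁ z₂) • z₂)
    (by simp only [map_add, map_sub, map_smul, smul_eq_mul, hω.self_eq_zero, mul_zero,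
          div_mul_cancel₀ _ hz, add_zero, sub_self])
    (by simp only [map_add, map_sub, map_smul, smul_eq_mul, hω.self_eq_zero, mul_zero,
          ← hω.neg_eq z₁ z₂, mul_neg, div_mul_cancel₀ _ hz, sub_zero, add_neg_cancel])
  simpa [← hω.neg_eq _ w, hw₁, hw₂] using key

noncomputable section

namespace TorusTimesSphere

variable {n : ℕ}

def extendByTwo (v : Fin n → ℝ) (p q : ℝ) : EuclideanSpace ℝ (Fin (n + 2)) :=
  WithLp.toLp 2 (Fin.append v ![p, q])

@[simp] lemma extendByTwo_castAdd (v : Fin n → ℝ) (p q : ℝ) (j : Fin n) :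
    extendByTwo v p q (Fin.castAdd 2 j) = v j :=
  Fin.append_left v _ j

@[simp] lemma extendByTwo_castSucc_last (v : Fin n → ℝ) (p q : ℝ) :
    extendByTwo v p q (Fin.last n).castSucc = p :=
  Fin.append_right v ![p, q] 0

@[simp] lemma extendByTwo_last (v : Fin n → ℝ) (p q : ℝ) :
    extendByTwo v p q (Fin.last (n + 1)) = q :=
  Fin.append_right v ![p, q] 1

lemma inner_eq_sum_add (y v : EuclideanSpace ℝ (Fin (n + 2))) :
    inner ℝ y v = ∑ j : Fin n, y (Fin.castAdd 2 j) * v (Fin.castAdd 2 j) +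
      y (Fin.last n).castSucc * v (Fin.last n).castSucc +
        y (Fin.last (n + 1)) * v (Fin.last (n + 1)) := by
  simp only [PiLp.inner_apply, RCLike.inner_apply, conj_trivial, Fin.sum_univ_castSucc]
  simp only [mul_comm (v _)]
  rfl

def stdSymplectic (n : ℕ) :
    LinearMap.BilinForm ℝ ((Fin n → ℝ) × EuclideanSpace ℝ (Fin (n + 2))) :=
  LinearMap.mk₂ ℝ
    (fun w w' => ∑ j : Fin n, (w.2 (Fin.castAdd 2 j) * w'.1 j - w'.2 (Fin.castAdd 2 j) * w.1 j) +
      (w.2 (Fin.last n).castSucc * w'.2 (Fin.last (n + 1)) -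
        w.2 (Fin.last (n + 1)) * w'.2 (Fin.last n).castSucc))
    (fun _ _ _ => by simp only [Prod.fst_add, Prod.snd_add, PiLp.add_apply, Pi.add_apply,
        add_mul, mul_add, Finset.sum_add_distrib, Finset.sum_sub_distrib]; ring)
    (fun _ _ _ => by simp only [Prod.smul_fst, Prod.smul_snd, PiLp.smul_apply, Pi.smul_apply,
        smul_eq_mul, mul_assoc, mul_left_comm _ (_ : ℝ), ← mul_sub, ← Finset.mul_sum]; ring)
    (fun _ _ _ => by simp only [Prod.fst_add, Prod.snd_add, PiLp.add_apply, Pi.add_apply,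
        add_mul, mul_add, Finset.sum_add_distrib, Finset.sum_sub_distrib]; ring)
    (fun _ _ _ => by simp only [Prod.smul_fst, Prod.smul_snd, PiLp.smul_apply, Pi.smul_apply,
        smul_eq_mul, mul_assoc, mul_left_comm _ (_ : ℝ), ← mul_sub, ← Finset.mul_sum]; ring)

lemma stdSymplectic_apply (w w' : (Fin n → ℝ) × EuclideanSpace ℝ (Fin (n + 2))) :
    stdSymplectic n w w' =
      ∑ j : Fin n, (w.2 (Fin.castAdd 2 j) * w'.1 j - w'.2 (Fin.castAdd 2 j) * w.1 j) +
        (w.2 (Fin.last n).castSucc * w'.2 (Fin.last (n + 1)) -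
          w.2 (Fin.last (n + 1)) * w'.2 (Fin.last n).castSucc) :=
  rfl

lemma isAlt_stdSymplectic : (stdSymplectic n).IsAlt := fun w => by
  simp [stdSymplectic_apply, mul_comm]

lemma separatingLeft_stdSymplectic : (stdSymplectic n).SeparatingLeft := by
  intro w hw
  -- pair `w = (u, (v, p, q))` with its image `(v, (-u, -q, p))` under the complex structure
  have hsq : w.1 ⬝ᵥ w.1 + ‖w.2‖ ^ 2 = 0 := by
    rw [← hw (fun j => w.2 (Fin.castAdd 2 j),
        extendByTwo (-w.1) (-w.2 (Fin.last (n + 1))) (w.2 (Fin.last n).castSucc)),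
      stdSymplectic_apply, ← real_inner_self_eq_norm_sq, inner_eq_sum_add, dotProduct]
    simp only [extendByTwo_castAdd, extendByTwo_castSucc_last, extendByTwo_last, Pi.neg_apply,
      neg_mul, Finset.sum_sub_distrib, Finset.sum_neg_distrib]
    ring
  obtain ⟨h₁, h₂⟩ :=
    (add_eq_zero_iff_of_nonneg (dotProduct_self_star_nonneg _) (sq_nonneg _)).mp hsq
  exact Prod.ext (dotProduct_self_eq_zero.mp h₁) (by simpa using h₂)

def contactForm (y : EuclideanSpace ℝ (Fin (n + 2)))
    (w : (Fin n → ℝ) × EuclideanSpace ℝ (Fin (n + 2))) : ℝ :=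
  ∑ j : Fin n, y (Fin.castAdd 2 j) * w.1 j +
    1 / 2 * (y (Fin.last n).castSucc * w.2 (Fin.last (n + 1)) -
      y (Fin.last (n + 1)) * w.2 (Fin.last n).castSucc)

variable (y : EuclideanSpace ℝ (Fin (n + 2)))

def innerDual : (Fin n → ℝ) × EuclideanSpace ℝ (Fin (n + 2)) :=
  (fun j => -y (Fin.castAdd 2 j),
    extendByTwo 0 (y (Fin.last (n + 1))) (-y (Fin.last n).castSucc))

def contactDual : (Fin n → ℝ) × EuclideanSpace ℝ (Fin (n + 2)) :=
  (0, extendByTwo (fun j => y (Fin.castAdd 2 j)) (y (Fin.last n).castSucc / 2)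
    (y (Fin.last (n + 1)) / 2))

lemma stdSymplectic_innerDual (w : (Fin n → ℝ) × EuclideanSpace ℝ (Fin (n + 2))) :
    stdSymplectic n (innerDual y) w = inner ℝ y w.2 := by
  simp only [stdSymplectic_apply, innerDual, inner_eq_sum_add, extendByTwo_castAdd,
    extendByTwo_castSucc_last, extendByTwo_last, Pi.zero_apply]
  simp only [zero_mul, neg_mul, sub_neg_eq_add, zero_add, mul_comm (w.2 _)]
  ring

lemma stdSymplectic_contactDual (w : (Fin n → ℝ) × EuclideanSpace ℝ (Fin (n + 2))) :
    stdSymplectic n (contactDual y) w = contactForm y w := by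
  simp only [stdSymplectic_apply, contactDual, contactForm, extendByTwo_castAdd,
    extendByTwo_castSucc_last, extendByTwo_last, Pi.zero_apply, mul_zero, sub_zero]
  ring

lemma stdSymplectic_innerDual_contactDual_pos (hy : y ≠ 0) :
    0 < stdSymplectic n (innerDual y) (contactDual y) := by
  have h : stdSymplectic n (innerDual y) (contactDual y) =
      (‖y‖ ^ 2 + ∑ j : Fin n, y (Fin.castAdd 2 j) * y (Fin.castAdd 2 j)) / 2 := by
    rw [stdSymplectic_innerDual, ← real_inner_self_eq_norm_sq, inner_eq_sum_add, inner_eq_sum_add]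
    simp only [contactDual, extendByTwo_castAdd, extendByTwo_castSucc_last, extendByTwo_last]
    ring
  have hs : 0 ≤ ∑ j : Fin n, y (Fin.castAdd 2 j) * y (Fin.castAdd 2 j) :=
    Finset.sum_nonneg fun j _ => mul_self_nonneg _
  rw [h]
  linarith [pow_pos (norm_pos_iff.mpr hy) 2]

theorem eq_zero_of_stdSymplectic_orthogonal_contactPlane (hy : y ≠ 0)
    {w : (Fin n → ℝ) × EuclideanSpace ℝ (Fin (n + 2))} (hw : inner ℝ y w.2 = 0)
    (hαw : contactForm y w = 0)
    (h : ∀ w', inner ℝ y w'.2 = 0 → contactForm y w' = 0 → stdSymplectic n w w' = 0) :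
    w = 0 := by
  simp only [← stdSymplectic_innerDual y, ← stdSymplectic_contactDual y] at hw hαw h
  exact isAlt_stdSymplectic.eq_zero_of_orthogonal_pair separatingLeft_stdSymplectic
    (stdSymplectic_innerDual_contactDual_pos y hy).ne' hw hαw h

lemma contactForm_zero_fst (v : EuclideanSpace ℝ (Fin (n + 2))) :
    contactForm y (0, v) =
      1 / 2 * (y (Fin.last n).castSucc * v (Fin.last (n + 1)) -
        y (Fin.last (n + 1)) * v (Fin.last n).castSucc) := by
  simp [contactForm]

lemma forall_contactForm_zero_fst_eq_zero_iff :
    (∀ v : EuclideanSpace ℝ (Fin (n + 2)), inner ℝ y v = 0 → contactForm y (0, v) = 0) ↔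
      y (Fin.last n).castSucc = 0 ∧ y (Fin.last (n + 1)) = 0 := by
  refine ⟨fun h => ?_, fun ⟨ha, hb⟩ v _ => by simp [contactForm_zero_fst, ha, hb]⟩
  -- `(innerDual y).2 = (0, …, 0, y_{n+2}, -y_{n+1})` is tangent to the sphere as `ω` is alternating
  have hJ := h (innerDual y).2 (by rw [← stdSymplectic_innerDual]; exact isAlt_stdSymplectic _)
  simp only [contactForm_zero_fst, innerDual, extendByTwo_castSucc_last, extendByTwo_last] at hJ
  constructor <;>
    nlinarith [sq_nonneg (y (Fin.last n).castSucc), sq_nonneg (y (Fin.last (n + 1)))]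

end TorusTimesSphere

end

open Metric TorusTimesSphere

/-- **A contact form on `𝕋ⁿ × S^{n+1}` whose spheres carry the standard
Legendrian open book.**  On `𝕋ⁿ × S^{n+1}` with `(x₁,…,xₙ) ∈ 𝕋ⁿ` and
`y = (y₁,…,y_{n+2}) ∈ S^{n+1} ⊂ ℝ^{n+2}`, consider
`α = Σⱼ yⱼ dxⱼ + ½(y_{n+1} dy_{n+2} − y_{n+2} dy_{n+1})`.  Pointwise, the
tangent space at `(x, y)` is `{(u, v) ∈ ℝⁿ × ℝ^{n+2} : ⟨y, v⟩ = 0}`, and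
`α(u,v) = Σⱼ yⱼ uⱼ + ½(y_{n+1} v_{n+2} − y_{n+2} v_{n+1})`, with
`dα((u,v),(u',v')) = Σⱼ (vⱼ u'ⱼ − v'ⱼ uⱼ) + dy_{n+1} ∧ dy_{n+2}`.  Then `α` is
a contact form (`dα` is nondegenerate on `ker α` at every point); its
restriction to the sphere `{x} × S^{n+1}` (vectors with `u = 0`) is
`β = ½(y_{n+1} dy_{n+2} − y_{n+2} dy_{n+1})`, which induces the standard
Legendrian open book on `S^{n+1}`: `β` vanishes on the whole tangent space of
the sphere exactly at the binding `{y_{n+1} = y_{n+2} = 0}`. -/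
theorem torus_times_sphere_contact_form (n : ℕ)
    (y : EuclideanSpace ℝ (Fin (n + 2)))
    (hy : y ∈ sphere (0 : EuclideanSpace ℝ (Fin (n + 2))) 1)
    (α : (Fin n → ℝ) × EuclideanSpace ℝ (Fin (n + 2)) → ℝ)
    (hα : ∀ w, α w =
      (∑ j : Fin n, y (Fin.castLE (by omega) j) * w.1 j) +
        (1 / 2) * (y ⟨n, by omega⟩ * w.2 ⟨n + 1, by omega⟩ -
          y ⟨n + 1, by omega⟩ * w.2 ⟨n, by omega⟩))
    (dα : ((Fin n → ℝ) × EuclideanSpace ℝ (Fin (n + 2))) →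
      ((Fin n → ℝ) × EuclideanSpace ℝ (Fin (n + 2))) → ℝ)
    (hdα : ∀ w w', dα w w' =
      (∑ j : Fin n, (w.2 (Fin.castLE (by omega) j) * w'.1 j -
        w'.2 (Fin.castLE (by omega) j) * w.1 j)) +
        (w.2 ⟨n, by omega⟩ * w'.2 ⟨n + 1, by omega⟩ -
          w.2 ⟨n + 1, by omega⟩ * w'.2 ⟨n, by omega⟩)) :
    -- `α` is a contact form: `dα` is nondegenerate on `ker α ∩ T_{(x,y)}M`
    (∀ w : (Fin n → ℝ) × EuclideanSpace ℝ (Fin (n + 2)),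
      inner ℝ y w.2 = (0 : ℝ) → α w = 0 →
      (∀ w' : (Fin n → ℝ) × EuclideanSpace ℝ (Fin (n + 2)),
        inner ℝ y w'.2 = (0 : ℝ) → α w' = 0 → dα w w' = 0) →
      w = 0) ∧
    -- the restriction of `α` to `{x} × S^{n+1}` is
    -- `½(y_{n+1} dy_{n+2} − y_{n+2} dy_{n+1})` …
    (∀ v : EuclideanSpace ℝ (Fin (n + 2)), α (0, v) =
      (1 / 2) * (y ⟨n, by omega⟩ * v ⟨n + 1, by omega⟩ -
        y ⟨n + 1, by omega⟩ * v ⟨n, by omega⟩)) ∧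
    -- … which induces the standard Legendrian open book on the sphere, with
    -- binding `{y_{n+1} = y_{n+2} = 0}`
    ((∀ v : EuclideanSpace ℝ (Fin (n + 2)), inner ℝ y v = (0 : ℝ) → α (0, v) = 0)
      ↔ (y ⟨n, by omega⟩ = 0 ∧ y ⟨n + 1, by omega⟩ = 0)) := by
  obtain rfl : α = contactForm y := funext hα
  obtain rfl : dα = fun w w' => stdSymplectic n w w' := funext₂ hdα
  exact ⟨fun _ hw hαw h => eq_zero_of_stdSymplectic_orthogonal_contactPlane y
      (ne_of_mem_sphere hy one_ne_zero) hw hαw h,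
    contactForm_zero_fst y, forall_contactForm_zero_fst_eq_zero_iff y⟩
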